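/- Let F₁ > 0, F₂ ≥ 0, A > 1, F(x) = F₁ for 0 ≤ x < A, F(x) = F₂ for x ≥ A, and let v ∈ C¹([0,1]) with v(x) ≥ 0 for all x ∈ [0,1]. Set D(x) = v(x)² + 2F₁(A − x). Then there are no collisions on [0,∞) if and only if for all x ∈ [0,1] both of the following inequalities hold: (i) −2(A − x)v'(x) < v(x) + √(D(x)); (ii) v'(x)·((F₁ − F₂)v(x) + F₂√(D(x))) ≥ F₁(F₁ − F₂). -/

import Mathlib

/-!
Let `u(x) = √D(x)` be the speed at which particle `x` reaches `A`, `T(x) = (u - v)/F₁` the time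
at which it does, and `s(x) = u - F₂ T`, so that after crossing `y(t, x) = F₂ t²/2 + s(x) t + c(x)`.
Without collisions, continuity preserves the order of the particles, and comparing two of them
for large `t` shows that `s` is nondecreasing; `s' ≥ 0` is condition (ii), which implies (i).
Conversely, (i) says `T' < 0` and (ii) says `s' ≥ 0`: a particle starting further right crosses
`A` first, and once both have crossed its lead keeps growing, so the order is never broken.
-/

open Set

/-- Trajectory of the particle starting at `x` with initial velocity `v x ≥ 0`, moving with
constant acceleration `F₁ > 0` until its position first reaches `A`, and with constant
acceleration `F₂ ≥ 0` afterwards.  The crossing time is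
`T = (−v(x) + √(v(x)² + 2F₁(A − x)))/F₁`. -/
noncomputable def stepTraj (F₁ F₂ A : ℝ) (v : ℝ → ℝ) (x t : ℝ) : ℝ :=
  let T := (-(v x) + Real.sqrt (v x ^ 2 + 2 * F₁ * (A - x))) / F₁
  if t ≤ T then x + v x * t + F₁ * t ^ 2 / 2
  else A + (v x + F₁ * T) * (t - T) + F₂ * (t - T) ^ 2 / 2

open Filter

noncomputable def crossingSpeed (F₁ A : ℝ) (v : ℝ → ℝ) (x : ℝ) : ℝ :=
  √(v x ^ 2 + 2 * F₁ * (A - x))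

noncomputable def crossingTime (F₁ A : ℝ) (v : ℝ → ℝ) (x : ℝ) : ℝ :=
  (crossingSpeed F₁ A v x - v x) / F₁

/-- After crossing `A` the particle's velocity at time `t` is `F₂ * t + driftSpeed F₁ F₂ A v x`. -/
noncomputable def driftSpeed (F₁ F₂ A : ℝ) (v : ℝ → ℝ) (x : ℝ) : ℝ :=
  crossingSpeed F₁ A v x - F₂ * crossingTime F₁ A v x

lemma nonneg_of_eventually_pos_mul_add {m c : ℝ} (h : ∀ᶠ t in atTop, 0 < m * t + c) : 0 ≤ m := by
  by_contra! hm
  have hbot : Tendsto (fun t ↦ m * t + c) atTop atBot :=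
    tendsto_atBot_add_const_right _ c (tendsto_id.const_mul_atTop_of_neg hm)
  obtain ⟨t, hpos, hneg⟩ := (h.and (hbot.eventually_le_atBot 0)).exists
  linarith

lemma pos_of_continuousOn_of_ne_zero {f : ℝ → ℝ} (hf : ContinuousOn f (Ici 0)) (h₀ : 0 < f 0)
    (hne : ∀ t, 0 ≤ t → f t ≠ 0) {t : ℝ} (ht : 0 ≤ t) : 0 < f t := by
  by_contra! h
  obtain ⟨s, hs, hfs⟩ := intermediate_value_Icc' ht (hf.mono Icc_subset_Ici_self) ⟨h, h₀.le⟩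
  exact hne s hs.1 hfs

lemma neg_two_mul_lt_add_iff {F₁ B u v p : ℝ} (hF₁ : 0 < F₁) (hvu : 0 < v + u)
    (hu : u ^ 2 = v ^ 2 + 2 * F₁ * B) :
    -2 * B * p < v + u ↔ 0 < (u - v) * p + F₁ := by
  have key : (v + u) * ((u - v) * p + F₁) = F₁ * (v + u - -2 * B * p) := by
    linear_combination p * hu
  rw [← sub_pos, ← mul_pos_iff_of_pos_left hF₁, ← key, mul_pos_iff_of_pos_left hvu]

lemma neg_two_mul_lt_add_of_le_mul {F₁ F₂ B u v p : ℝ} (hF₁ : 0 < F₁) (hF₂ : 0 ≤ F₂)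
    (hv : 0 ≤ v) (hvu : v < u) (hu : u ^ 2 = v ^ 2 + 2 * F₁ * B)
    (h : F₁ * (F₁ - F₂) ≤ p * ((F₁ - F₂) * v + F₂ * u)) :
    -2 * B * p < v + u := by
  refine (neg_two_mul_lt_add_iff hF₁ (by linarith) hu).2 ?_
  by_contra! hq
  have hp : p < 0 := by nlinarith
  -- the gap in `h` is `F₁ * (v * p - F₁) + F₂ * ((u - v) * p + F₁)`, a sum of two negative terms
  nlinarith [mul_nonpos_of_nonneg_of_nonpos hF₂ hq, mul_nonpos_of_nonneg_of_nonpos hv hp.le]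

section
variable {F₁ F₂ A : ℝ} {v : ℝ → ℝ} {x t : ℝ}

lemma crossingSpeed_sq (hF₁ : 0 < F₁) (hxA : x < A) :
    crossingSpeed F₁ A v x ^ 2 = v x ^ 2 + 2 * F₁ * (A - x) :=
  Real.sq_sqrt (by nlinarith [sq_nonneg (v x)])

lemma abs_lt_crossingSpeed (hF₁ : 0 < F₁) (hxA : x < A) : |v x| < crossingSpeed F₁ A v x := by
  rw [← Real.sqrt_sq_eq_abs]
  exact Real.sqrt_lt_sqrt (sq_nonneg _)
    (lt_add_of_pos_right _ (mul_pos (mul_pos two_pos hF₁) (sub_pos.2 hxA)))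

lemma crossingSpeed_pos (hF₁ : 0 < F₁) (hxA : x < A) : 0 < crossingSpeed F₁ A v x :=
  (abs_nonneg _).trans_lt (abs_lt_crossingSpeed hF₁ hxA)

lemma lt_crossingSpeed (hF₁ : 0 < F₁) (hxA : x < A) : v x < crossingSpeed F₁ A v x :=
  (abs_lt.1 (abs_lt_crossingSpeed hF₁ hxA)).2

lemma add_crossingSpeed_pos (hF₁ : 0 < F₁) (hxA : x < A) : 0 < v x + crossingSpeed F₁ A v x :=
  neg_lt_iff_pos_add.1 (abs_lt.1 (abs_lt_crossingSpeed hF₁ hxA)).1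

lemma crossingTime_pos (hF₁ : 0 < F₁) (hxA : x < A) : 0 < crossingTime F₁ A v x :=
  div_pos (sub_pos.2 (lt_crossingSpeed hF₁ hxA)) hF₁

lemma add_mul_crossingTime (hF₁ : 0 < F₁) :
    v x + F₁ * crossingTime F₁ A v x = crossingSpeed F₁ A v x := by
  unfold crossingTime; field_simp; ring

lemma stepTraj_eq (hF₁ : 0 < F₁) :
    stepTraj F₁ F₂ A v x t =
      if t ≤ crossingTime F₁ A v x then x + v x * t + F₁ * t ^ 2 / 2
      else A + crossingSpeed F₁ A v x * (t - crossingTime F₁ A v x) +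
        F₂ * (t - crossingTime F₁ A v x) ^ 2 / 2 := by
  have hT : (-v x + √(v x ^ 2 + 2 * F₁ * (A - x))) / F₁ = crossingTime F₁ A v x := by
    unfold crossingTime crossingSpeed; ring
  simp only [stepTraj, hT, add_mul_crossingTime hF₁]

lemma stepTraj_of_le_crossingTime (hF₁ : 0 < F₁) (ht : t ≤ crossingTime F₁ A v x) :
    stepTraj F₁ F₂ A v x t = x + v x * t + F₁ * t ^ 2 / 2 := by
  rw [stepTraj_eq hF₁, if_pos ht]

lemma position_crossingTime (hF₁ : 0 < F₁) (hxA : x < A) :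
    x + v x * crossingTime F₁ A v x + F₁ * crossingTime F₁ A v x ^ 2 / 2 = A := by
  have hu := crossingSpeed_sq (v := v) hF₁ hxA
  unfold crossingTime
  field_simp
  linear_combination hu

lemma stepTraj_of_crossingTime_le (hF₁ : 0 < F₁) (hxA : x < A) (ht : crossingTime F₁ A v x ≤ t) :
    stepTraj F₁ F₂ A v x t = A + crossingSpeed F₁ A v x * (t - crossingTime F₁ A v x) +
      F₂ * (t - crossingTime F₁ A v x) ^ 2 / 2 := by
  rcases ht.lt_or_eq with ht | rfl
  · rw [stepTraj_eq hF₁, if_neg ht.not_ge]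
  · rw [stepTraj_of_le_crossingTime hF₁ le_rfl, position_crossingTime hF₁ hxA]
    ring

lemma position_lt_of_lt_crossingTime (hF₁ : 0 < F₁) (hxA : x < A) (ht₀ : 0 ≤ t)
    (ht : t < crossingTime F₁ A v x) : x + v x * t + F₁ * t ^ 2 / 2 < A := by
  have hvu := abs_lt.1 (abs_lt_crossingSpeed (v := v) hF₁ hxA)
  have key : A - (x + v x * t + F₁ * t ^ 2 / 2) =
      (crossingTime F₁ A v x - t) * (v x + crossingSpeed F₁ A v x + F₁ * t) / 2 := by
    linear_combination -position_crossingTime (v := v) hF₁ hxA +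
      (crossingTime F₁ A v x - t) / 2 * add_mul_crossingTime (A := A) (v := v) (x := x) hF₁
  have : 0 < A - (x + v x * t + F₁ * t ^ 2 / 2) := by
    rw [key]; exact div_pos (mul_pos (sub_pos.2 ht) (by nlinarith)) two_pos
  linarith

lemma stepTraj_zero (hF₁ : 0 < F₁) (hxA : x < A) : stepTraj F₁ F₂ A v x 0 = x := by
  rw [stepTraj_of_le_crossingTime hF₁ (crossingTime_pos hF₁ hxA).le]; ring

lemma continuous_stepTraj (hF₁ : 0 < F₁) (hxA : x < A) : Continuous (stepTraj F₁ F₂ A v x) := by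
  have : stepTraj F₁ F₂ A v x = fun t ↦ _ := funext fun t ↦ stepTraj_eq (t := t) hF₁
  rw [this]
  refine Continuous.if_le (by fun_prop) (by fun_prop) continuous_id continuous_const ?_
  rintro t rfl
  rw [position_crossingTime hF₁ hxA]; ring

lemma hasDerivWithinAt_crossingSpeed {s : Set ℝ} {p : ℝ} (hF₁ : 0 < F₁) (hxA : x < A)
    (hv : HasDerivWithinAt v p s x) :
    HasDerivWithinAt (crossingSpeed F₁ A v) ((v x * p - F₁) / crossingSpeed F₁ A v x) s x := by
  have hD : HasDerivWithinAt (fun y ↦ v y ^ 2 + 2 * F₁ * (A - y)) (2 * v x * p - 2 * F₁) s x :=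
    ((hv.pow 2).add (((hasDerivWithinAt_id x s).const_sub A).const_mul (2 * F₁))).congr_deriv
      (by push_cast; ring)
  have hu := crossingSpeed_pos (v := v) hF₁ hxA
  refine (hD.sqrt (crossingSpeed_sq (v := v) hF₁ hxA ▸ (pow_pos hu 2).ne')).congr_deriv ?_
  rw [show √(v x ^ 2 + 2 * F₁ * (A - x)) = crossingSpeed F₁ A v x from rfl]
  field_simp

lemma hasDerivWithinAt_crossingTime {s : Set ℝ} {p : ℝ} (hF₁ : 0 < F₁) (hxA : x < A)
    (hv : HasDerivWithinAt v p s x) :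
    HasDerivWithinAt (crossingTime F₁ A v)
      (-(((crossingSpeed F₁ A v x - v x) * p + F₁) / (F₁ * crossingSpeed F₁ A v x))) s x := by
  have hu := crossingSpeed_pos (v := v) hF₁ hxA
  refine (((hasDerivWithinAt_crossingSpeed hF₁ hxA hv).sub hv).div_const F₁).congr_deriv ?_
  field_simp
  ring

lemma hasDerivWithinAt_driftSpeed {s : Set ℝ} {p : ℝ} (hF₁ : 0 < F₁) (hxA : x < A)
    (hv : HasDerivWithinAt v p s x) :
    HasDerivWithinAt (driftSpeed F₁ F₂ A v)
      ((p * ((F₁ - F₂) * v x + F₂ * crossingSpeed F₁ A v x) - F₁ * (F₁ - F₂)) /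
        (F₁ * crossingSpeed F₁ A v x)) s x := by
  have hu := crossingSpeed_pos (v := v) hF₁ hxA
  refine ((hasDerivWithinAt_crossingSpeed hF₁ hxA hv).sub
    ((hasDerivWithinAt_crossingTime hF₁ hxA hv).const_mul F₂)).congr_deriv ?_
  field_simp
  ring

lemma stepTraj_lt_stepTraj {x₁ x₂ : ℝ} (hF₁ : 0 < F₁) (hF₂ : 0 ≤ F₂) (hx : x₁ < x₂)
    (hx₂A : x₂ < A) (hT : crossingTime F₁ A v x₂ < crossingTime F₁ A v x₁)
    (hs : driftSpeed F₁ F₂ A v x₁ ≤ driftSpeed F₁ F₂ A v x₂) (ht : 0 ≤ t) :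
    stepTraj F₁ F₂ A v x₁ t < stepTraj F₁ F₂ A v x₂ t := by
  have hx₁A : x₁ < A := hx.trans hx₂A
  have hT₂ := crossingTime_pos (v := v) hF₁ hx₂A
  have hu₂ := crossingSpeed_pos (v := v) hF₁ hx₂A
  rcases le_or_gt t (crossingTime F₁ A v x₂) with h₂ | h₂
  · -- the gap is affine in `t` and positive at `t = 0` and at the crossing time of `x₂`
    rw [stepTraj_of_le_crossingTime hF₁ (h₂.trans hT.le), stepTraj_of_le_crossingTime hF₁ h₂]
    have hcross₁ := position_lt_of_lt_crossingTime hF₁ hx₁A hT₂.le hT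
    have hcross₂ := position_crossingTime (v := v) hF₁ hx₂A
    rcases le_or_gt (v x₁) (v x₂) with hv | hv
    · nlinarith [mul_nonneg (sub_nonneg.2 hv) ht]
    · nlinarith [mul_nonneg (sub_nonneg.2 h₂) (sub_pos.2 hv).le]
  rcases lt_or_ge t (crossingTime F₁ A v x₁) with h₁ | h₁
  · rw [stepTraj_of_le_crossingTime hF₁ h₁.le, stepTraj_of_crossingTime_le hF₁ hx₂A h₂.le]
    have := position_lt_of_lt_crossingTime hF₁ hx₁A ht h₁
    nlinarith [mul_pos hu₂ (sub_pos.2 h₂), mul_nonneg hF₂ (sq_nonneg (t - crossingTime F₁ A v x₂))]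
  · rw [stepTraj_of_crossingTime_le hF₁ hx₁A h₁,
      stepTraj_of_crossingTime_le hF₁ hx₂A (hT.le.trans h₁)]
    -- once both have crossed, the gap grows at rate `driftSpeed x₂ - driftSpeed x₁ ≥ 0`
    have hδ : 0 < crossingTime F₁ A v x₁ - crossingTime F₁ A v x₂ := sub_pos.2 hT
    unfold driftSpeed at hs
    nlinarith [mul_pos hu₂ hδ, mul_nonneg hF₂ (sq_nonneg (crossingTime F₁ A v x₁ -
      crossingTime F₁ A v x₂)), mul_nonneg (sub_nonneg.2 h₁) (sub_nonneg.2 hs)]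

lemma driftSpeed_le_of_forall_lt {x₁ x₂ : ℝ} (hF₁ : 0 < F₁) (hx₁A : x₁ < A) (hx₂A : x₂ < A)
    (h : ∀ t, 0 ≤ t → stepTraj F₁ F₂ A v x₁ t < stepTraj F₁ F₂ A v x₂ t) :
    driftSpeed F₁ F₂ A v x₁ ≤ driftSpeed F₁ F₂ A v x₂ := by
  refine sub_nonneg.1 (nonneg_of_eventually_pos_mul_add
    (c := crossingSpeed F₁ A v x₁ * crossingTime F₁ A v x₁ -
      crossingSpeed F₁ A v x₂ * crossingTime F₁ A v x₂ +
      F₂ * (crossingTime F₁ A v x₂ ^ 2 - crossingTime F₁ A v x₁ ^ 2) / 2) ?_)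
  filter_upwards [eventually_ge_atTop 0, eventually_ge_atTop (crossingTime F₁ A v x₁),
    eventually_ge_atTop (crossingTime F₁ A v x₂)] with t ht ht₁ ht₂
  have := h t ht
  rw [stepTraj_of_crossingTime_le hF₁ hx₁A ht₁, stepTraj_of_crossingTime_le hF₁ hx₂A ht₂] at this
  unfold driftSpeed
  linarith

lemma driftSpeed_le_of_forall_ne {x₁ x₂ : ℝ} (hF₁ : 0 < F₁) (hx : x₁ < x₂) (hx₂A : x₂ < A)
    (h : ∀ t, 0 ≤ t → stepTraj F₁ F₂ A v x₁ t ≠ stepTraj F₁ F₂ A v x₂ t) :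
    driftSpeed F₁ F₂ A v x₁ ≤ driftSpeed F₁ F₂ A v x₂ := by
  have hx₁A : x₁ < A := hx.trans hx₂A
  refine driftSpeed_le_of_forall_lt hF₁ hx₁A hx₂A fun t ht ↦ sub_pos.1 ?_
  refine pos_of_continuousOn_of_ne_zero
    (f := fun t ↦ stepTraj F₁ F₂ A v x₂ t - stepTraj F₁ F₂ A v x₁ t)
    ((continuous_stepTraj hF₁ hx₂A).sub (continuous_stepTraj hF₁ hx₁A)).continuousOn ?_
    (fun t ht ↦ sub_ne_zero.2 (h t ht).symm) ht
  simpa [stepTraj_zero hF₁ hx₁A, stepTraj_zero hF₁ hx₂A] using hx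

lemma strictAntiOn_crossingTime {D : Set ℝ} {v' : ℝ → ℝ} (hF₁ : 0 < F₁) (hD : Convex ℝ D)
    (hDA : ∀ x ∈ D, x < A) (hv : ∀ x ∈ D, HasDerivWithinAt v (v' x) D x)
    (h : ∀ x ∈ D, -2 * (A - x) * v' x < v x + crossingSpeed F₁ A v x) :
    StrictAntiOn (crossingTime F₁ A v) D := by
  have hT := fun x hx ↦ hasDerivWithinAt_crossingTime hF₁ (hDA x hx) (hv x hx)
  refine strictAntiOn_of_hasDerivWithinAt_neg hD (fun x hx ↦ (hT x hx).continuousWithinAt)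
    (fun x hx ↦ (hT x (interior_subset hx)).mono interior_subset) fun x hx ↦ ?_
  replace hx := interior_subset hx
  have hq := (neg_two_mul_lt_add_iff hF₁ (add_crossingSpeed_pos hF₁ (hDA x hx))
    (crossingSpeed_sq hF₁ (hDA x hx))).1 (h x hx)
  exact neg_neg_of_pos (div_pos hq (mul_pos hF₁ (crossingSpeed_pos hF₁ (hDA x hx))))

lemma monotoneOn_driftSpeed {D : Set ℝ} {v' : ℝ → ℝ} (hF₁ : 0 < F₁) (hD : Convex ℝ D)
    (hDA : ∀ x ∈ D, x < A) (hv : ∀ x ∈ D, HasDerivWithinAt v (v' x) D x)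
    (h : ∀ x ∈ D, F₁ * (F₁ - F₂) ≤
      v' x * ((F₁ - F₂) * v x + F₂ * crossingSpeed F₁ A v x)) :
    MonotoneOn (driftSpeed F₁ F₂ A v) D := by
  have hs := fun x hx ↦ hasDerivWithinAt_driftSpeed (F₂ := F₂) hF₁ (hDA x hx) (hv x hx)
  refine monotoneOn_of_hasDerivWithinAt_nonneg hD (fun x hx ↦ (hs x hx).continuousWithinAt)
    (fun x hx ↦ (hs x (interior_subset hx)).mono interior_subset) fun x hx ↦ ?_
  replace hx := interior_subset hx
  exact div_nonneg (sub_nonneg.2 (h x hx)) (mul_pos hF₁ (crossingSpeed_pos hF₁ (hDA x hx))).le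

lemma le_mul_of_monotoneOn_driftSpeed {s : Set ℝ} {p : ℝ} (hF₁ : 0 < F₁) (hxA : x < A)
    (hs : UniqueDiffWithinAt ℝ s x) (hv : HasDerivWithinAt v p s x)
    (hmono : MonotoneOn (driftSpeed F₁ F₂ A v) s) :
    F₁ * (F₁ - F₂) ≤ p * ((F₁ - F₂) * v x + F₂ * crossingSpeed F₁ A v x) := by
  have h := (hasDerivWithinAt_driftSpeed hF₁ hxA hv).derivWithin hs ▸ hmono.derivWithin_nonneg
  rwa [le_div_iff₀ (mul_pos hF₁ (crossingSpeed_pos hF₁ hxA)), zero_mul, sub_nonneg] at h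

lemma strictMonoOn_stepTraj {S : Set ℝ} (hF₁ : 0 < F₁) (hF₂ : 0 ≤ F₂) (hSA : ∀ x ∈ S, x < A)
    (hT : StrictAntiOn (crossingTime F₁ A v) S) (hs : MonotoneOn (driftSpeed F₁ F₂ A v) S)
    (ht : 0 ≤ t) : StrictMonoOn (fun x ↦ stepTraj F₁ F₂ A v x t) S := fun _ hx₁ _ hx₂ h ↦
  stepTraj_lt_stepTraj hF₁ hF₂ h (hSA _ hx₂) (hT hx₁ hx₂ h) (hs hx₁ hx₂ h.le) ht

lemma monotoneOn_driftSpeed_of_noCollision {S : Set ℝ} (hF₁ : 0 < F₁) (hSA : ∀ x ∈ S, x < A)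
    (hNC : ∀ t, 0 ≤ t → ∀ x₁ ∈ S, ∀ x₂ ∈ S, x₁ ≠ x₂ →
      stepTraj F₁ F₂ A v x₁ t ≠ stepTraj F₁ F₂ A v x₂ t) :
    MonotoneOn (driftSpeed F₁ F₂ A v) S := fun a ha b hb hab ↦
  hab.eq_or_lt.elim (fun h ↦ h ▸ le_rfl) fun h ↦
    driftSpeed_le_of_forall_ne hF₁ h (hSA b hb) fun t ht ↦ hNC t ht a ha b hb h.ne

end

theorem step_force_no_collisions_iff_general
    (F₁ F₂ A : ℝ) (v v' : ℝ → ℝ)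
    (hF₁ : 0 < F₁) (hF₂ : 0 ≤ F₂) (hA : 1 < A)
    (hv : ∀ x ∈ Icc (0:ℝ) 1, HasDerivWithinAt v (v' x) (Icc (0:ℝ) 1) x)
    (hvnn : ∀ x ∈ Icc (0:ℝ) 1, 0 ≤ v x) :
    (∀ t, 0 ≤ t → ∀ x₁ ∈ Icc (0:ℝ) 1, ∀ x₂ ∈ Icc (0:ℝ) 1, x₁ ≠ x₂ →
        stepTraj F₁ F₂ A v x₁ t ≠ stepTraj F₁ F₂ A v x₂ t) ↔
      (∀ x ∈ Icc (0:ℝ) 1,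
        -2 * (A - x) * v' x < v x + Real.sqrt (v x ^ 2 + 2 * F₁ * (A - x)) ∧
        F₁ * (F₁ - F₂) ≤
          v' x * ((F₁ - F₂) * v x + F₂ * Real.sqrt (v x ^ 2 + 2 * F₁ * (A - x)))) := by
  have hxA : ∀ x ∈ Icc (0:ℝ) 1, x < A := fun x hx ↦ hx.2.trans_lt hA
  constructor
  · intro hNC x hx
    have hii := le_mul_of_monotoneOn_driftSpeed hF₁ (hxA x hx) (uniqueDiffOn_Icc zero_lt_one x hx)
      (hv x hx) (monotoneOn_driftSpeed_of_noCollision hF₁ hxA hNC)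
    exact ⟨neg_two_mul_lt_add_of_le_mul hF₁ hF₂ (hvnn x hx) (lt_crossingSpeed hF₁ (hxA x hx))
      (crossingSpeed_sq hF₁ (hxA x hx)) hii, hii⟩
  · intro hcond t ht x₁ hx₁ x₂ hx₂
    have hT := strictAntiOn_crossingTime hF₁ (convex_Icc 0 1) hxA hv fun x hx ↦ (hcond x hx).1
    have hs := monotoneOn_driftSpeed hF₁ (convex_Icc 0 1) hxA hv fun x hx ↦ (hcond x hx).2
    exact (strictMonoOn_stepTraj hF₁ hF₂ hxA hT hs ht).injOn.ne hx₁ hx₂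

/-- One gap, general nonnegative `C¹` initial velocities: for `F₁ > 0`,
`F₂ ≥ 0`, `A > 1`, `v ∈ C¹([0,1])` with `v ≥ 0`, and `D(x) = v(x)² + 2F₁(A − x)`, there are
no collisions on `[0,∞)` iff for every `x ∈ [0,1]` both
(i) `−2(A − x)v'(x) < v(x) + √(D(x))` and
(ii) `v'(x)·((F₁ − F₂)v(x) + F₂√(D(x))) ≥ F₁(F₁ − F₂)` hold. -/
theorem step_force_no_collisions_iff
    (F₁ F₂ A : ℝ) (v v' : ℝ → ℝ)
    (hF₁ : 0 < F₁) (hF₂ : 0 ≤ F₂) (hA : 1 < A)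
    (hv : ∀ x ∈ Icc (0:ℝ) 1, HasDerivWithinAt v (v' x) (Icc (0:ℝ) 1) x)
    (hv'c : ContinuousOn v' (Icc (0:ℝ) 1))
    (hvnn : ∀ x ∈ Icc (0:ℝ) 1, 0 ≤ v x) :
    (∀ t, 0 ≤ t → ∀ x₁ ∈ Icc (0:ℝ) 1, ∀ x₂ ∈ Icc (0:ℝ) 1, x₁ ≠ x₂ →
        stepTraj F₁ F₂ A v x₁ t ≠ stepTraj F₁ F₂ A v x₂ t) ↔
      (∀ x ∈ Icc (0:ℝ) 1,
        -2 * (A - x) * v' x < v x + Real.sqrt (v x ^ 2 + 2 * F₁ * (A - x)) ∧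
        F₁ * (F₁ - F₂) ≤
          v' x * ((F₁ - F₂) * v x + F₂ * Real.sqrt (v x ^ 2 + 2 * F₁ * (A - x)))) :=
  step_force_no_collisions_iff_general F₁ F₂ A v v' hF₁ hF₂ hA hv hvnn
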